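/- Let Assumption 1 hold (for every i, ℓ_{y_i} is differentiable on ℝ^{d_y}, convex, and nonnegative) and let λ > 0. Then for any θ ∈ ℝ^{d_θ} that is not a global minimum of L, there is no local minimum (a, b, W) ∈ ℝ^{d_y} × ℝ^{d_y} × ℝ^{d_x × d_y} of the restricted map L̃|_θ : (a,b,W) ↦ L̃(θ,a,b,W). -/

import Mathlib

/-!
At a local minimum of the restricted map the output weight `a` must vanish: replacing
`(a, b)` by `(eᵗ a, b - t)` leaves the neuron unchanged and turns the penalty into
`λ e^{2t} ‖a‖²`, whose derivative at `t = 0` is `2λ‖a‖²`. Once `a = 0` the objective no longer depends on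
`(b, W)`, so `a = 0` stays a local minimum of `a ↦ L̃(θ, a, b', W')` for all nearby `(b', W')`.
The first-order condition in direction `eₖ` says that `∑ᵢ ∂ₖℓ_{yᵢ}(f(xᵢ;θ)) e^{⟨w, xᵢ⟩}`
vanishes for all `w` near `wₖ`; since exponentials with distinct exponents are linearly
independent, the gradients `∇ℓ_{yᵢ}(f(xᵢ;θ))` sum to zero over every group of equal inputs.
As `f(xᵢ;θ')` depends on `i` only through `xᵢ`, the convexity inequality
`ℓ(q') ≥ ℓ(q) + ∇ℓ(q)(q' - q)` summed over `i` gives `L θ ≤ L θ'` for every `θ'`.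
-/

open scoped RealInnerProductSpace

noncomputable section

/-- The added neuron: `g(x; a, b, W)ₖ = aₖ · exp(⟨wₖ, x⟩ + bₖ)`. -/
def addedNeuron (dx dy : ℕ) (a b : EuclideanSpace ℝ (Fin dy))
    (W : Fin dy → EuclideanSpace ℝ (Fin dx)) (x : EuclideanSpace ℝ (Fin dx)) :
    EuclideanSpace ℝ (Fin dy) :=
  WithLp.toLp 2 fun k => a k * Real.exp (⟪W k, x⟫ + b k)

open Finset Filter Topology

theorem sum_mul_pow_eq_zero_of_sum_mul_exp_eventuallyEq_zero {ι : Type*} [Fintype ι]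
    (c l : ι → ℝ) (h : (fun s => ∑ i, c i * Real.exp (l i * s)) =ᶠ[𝓝 0] 0) (n : ℕ) :
    ∑ i, c i * l i ^ n = 0 := by
  have hderiv := (h.iteratedDeriv n).eq_of_nhds
  rw [iteratedDeriv_fun_sum (f := fun i s => c i * Real.exp (l i * s))
    fun i _ => by fun_prop] at hderiv
  simpa using hderiv

theorem sum_filter_eq_zero_of_sum_mul_pow_eq_zero {K ι : Type*} [Field K] [DecidableEq K]
    [Fintype ι] (c l : ι → K) (h : ∀ n : ℕ, ∑ i, c i * l i ^ n = 0) (i : ι) :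
    ∑ j with l j = l i, c j = 0 := by
  have heval (p : Polynomial K) : ∑ j, c j * p.eval (l j) = 0 := by
    simp_rw [Polynomial.eval_eq_sum_range, mul_sum, ← mul_assoc, mul_comm (c _), mul_assoc]
    rw [sum_comm]
    simp [← mul_sum, h]
  have hmem (j : ι) : l j ∈ univ.image l := mem_image_of_mem l (mem_univ j)
  rw [← heval (Lagrange.basis (univ.image l) id (l i)), sum_filter]
  refine sum_congr rfl fun j _ => ?_
  split_ifs with hj
  · have hself : (Lagrange.basis (univ.image l) id (l i)).eval (l i) = 1 :=
      Lagrange.eval_basis_self (Set.injOn_id _) (hmem i)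
    rw [hj, hself, mul_one]
  · rw [eq_comm]
    exact mul_eq_zero_of_right _ (Lagrange.eval_basis_of_ne (v := id) (Ne.symm hj) (hmem j))

theorem Set.Finite.exists_injOn_inner {X : Type*} [NormedAddCommGroup X] [InnerProductSpace ℝ X]
    {s : Set X} (hs : s.Finite) : ∃ v : X, s.InjOn (⟪v, ·⟫) := by
  by_contra! hv
  have : Finite s := hs.to_subtype
  let p : {uv : s × s // uv.1 ≠ uv.2} → Submodule ℝ X :=
    fun uv => (ℝ ∙ ((uv.1.1 : X) - uv.1.2))ᗮ
  have hcover : ⋃ uv, (p uv : Set X) = Set.univ := by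
    refine Set.eq_univ_of_forall fun v => ?_
    obtain ⟨u, hu, w, hw, huw, hne⟩ : ∃ u ∈ s, ∃ w ∈ s, ⟪v, u⟫ = ⟪v, w⟫ ∧ u ≠ w := by
      simpa [Set.InjOn] using hv v
    refine Set.mem_iUnion.mpr ⟨⟨(⟨u, hu⟩, ⟨w, hw⟩), by simpa using hne⟩, ?_⟩
    simp [p, Submodule.mem_orthogonal_singleton_iff_inner_left, inner_sub_right, huw]
  obtain ⟨⟨⟨u, w⟩, hne⟩, htop⟩ := Subspace.exists_eq_top_of_iUnion_eq_univ hcover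
  rw [Submodule.orthogonal_eq_top_iff, Submodule.span_singleton_eq_bot, sub_eq_zero] at htop
  exact hne (Subtype.ext htop)

theorem sum_filter_eq_zero_of_sum_mul_exp_inner_eventually_eq_zero {ι X : Type*} [Fintype ι]
    [NormedAddCommGroup X] [InnerProductSpace ℝ X] [DecidableEq X] (c : ι → ℝ) (x : ι → X)
    {w₀ : X} (h : ∀ᶠ w in 𝓝 w₀, ∑ i, c i * Real.exp ⟪w, x i⟫ = 0) (i : ι) :
    ∑ j with x j = x i, c j = 0 := by
  obtain ⟨v, hv⟩ := (Set.finite_range x).exists_injOn_inner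
  have hline : (fun s => ∑ j, c j * Real.exp ⟪w₀, x j⟫ * Real.exp (⟪v, x j⟫ * s)) =ᶠ[𝓝 0] 0 := by
    have hγ : Tendsto (fun s : ℝ => w₀ + s • v) (𝓝 0) (𝓝 w₀) := by
      have hcont : Continuous fun s : ℝ => w₀ + s • v := by fun_prop
      simpa using hcont.tendsto 0
    filter_upwards [hγ.eventually h] with s hs
    rw [Pi.zero_apply, ← hs]
    refine sum_congr rfl fun j _ => ?_
    rw [inner_add_left, real_inner_smul_left, Real.exp_add, mul_comm s]
    ring
  have hgroup := sum_filter_eq_zero_of_sum_mul_pow_eq_zero _ _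
    (sum_mul_pow_eq_zero_of_sum_mul_exp_eventuallyEq_zero _ _ hline) i
  have hfilter : (univ.filter fun j => ⟪v, x j⟫ = ⟪v, x i⟫) = univ.filter fun j => x j = x i :=
    filter_congr fun j _ => ⟨hv (Set.mem_range_self j) (Set.mem_range_self i), congrArg _⟩
  rw [hfilter, sum_congr rfl fun j hj => by rw [(mem_filter.1 hj).2], ← sum_mul] at hgroup
  exact (mul_eq_zero.1 hgroup).resolve_right (Real.exp_pos _).ne'

theorem ConvexOn.add_fderiv_sub_le {E : Type*} [NormedAddCommGroup E] [NormedSpace ℝ E]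
    {φ : E → ℝ} (hconv : ConvexOn ℝ Set.univ φ) {q : E} (hdiff : DifferentiableAt ℝ φ q)
    (q' : E) : φ q + fderiv ℝ φ q (q' - q) ≤ φ q' := by
  have hg : ConvexOn ℝ Set.univ (φ ∘ AffineMap.lineMap (k := ℝ) q q') := by
    simpa using hconv.comp_affineMap (AffineMap.lineMap (k := ℝ) q q')
  have hderiv : HasDerivAt (φ ∘ AffineMap.lineMap (k := ℝ) q q') (fderiv ℝ φ q (q' - q)) 0 :=
    hdiff.hasFDerivAt.comp_hasDerivAt_of_eq 0 AffineMap.hasDerivAt_lineMap (by simp)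
  have hslope := hg.le_slope_of_hasDerivAt (Set.mem_univ 0) (Set.mem_univ 1) zero_lt_one hderiv
  simp only [slope_def_field, Function.comp_apply, AffineMap.lineMap_apply_zero,
    AffineMap.lineMap_apply_one, sub_zero, div_one] at hslope
  linarith

theorem sum_le_sum_of_sum_filter_fderiv_eq_zero {ι X E : Type*} [Fintype ι] [DecidableEq X]
    [NormedAddCommGroup E] [NormedSpace ℝ E] {φ : ι → E → ℝ} {x : ι → X} {F : X → E}
    (hconv : ∀ i, ConvexOn ℝ Set.univ (φ i)) (hdiff : ∀ i, DifferentiableAt ℝ (φ i) (F (x i)))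
    (hgrad : ∀ i, ∑ j with x j = x i, fderiv ℝ (φ j) (F (x j)) = 0) (F' : X → E) :
    ∑ i, φ i (F (x i)) ≤ ∑ i, φ i (F' (x i)) := by
  have hlin : ∑ i, fderiv ℝ (φ i) (F (x i)) (F' (x i) - F (x i)) = 0 := by
    rw [← sum_fiberwise_of_maps_to fun i _ => mem_image_of_mem x (mem_univ i)]
    refine sum_eq_zero fun z hz => ?_
    obtain ⟨i, -, rfl⟩ := mem_image.1 hz
    calc ∑ j with x j = x i, fderiv ℝ (φ j) (F (x j)) (F' (x j) - F (x j))
        = ∑ j with x j = x i, fderiv ℝ (φ j) (F (x j)) (F' (x i) - F (x i)) :=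
          sum_congr rfl fun j hj => by rw [(mem_filter.1 hj).2]
      _ = 0 := by rw [← _root_.sum_apply, hgrad i, zero_apply]
  calc ∑ i, φ i (F (x i))
      = ∑ i, (φ i (F (x i)) + fderiv ℝ (φ i) (F (x i)) (F' (x i) - F (x i))) := by
        rw [sum_add_distrib, hlin, add_zero]
    _ ≤ ∑ i, φ i (F' (x i)) := sum_le_sum fun i _ => (hconv i).add_fderiv_sub_le (hdiff i) _

theorem IsLocalMin.eventually_isLocalMin_left_of_forall_eq {α β γ : Type*} [TopologicalSpace α]
    [TopologicalSpace β] [Preorder γ] {f : α × β → γ} {a : α} {b : β} (h : IsLocalMin f (a, b))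
    (hf : ∀ b', f (a, b') = f (a, b)) : ∀ᶠ b' in 𝓝 b, IsLocalMin (fun a' => f (a', b')) a := by
  rw [IsLocalMin, IsMinFilter, nhds_prod_eq] at h
  obtain ⟨s, hs, t, ht, hst⟩ := eventually_prod_iff.1 h
  filter_upwards [ht] with b' hb'
  filter_upwards [hs] with a' ha'
  rw [hf]
  exact hst ha' hb'

theorem sum_fderiv_mul_eq_zero_of_isLocalMin {ι E : Type*} [Fintype ι] [NormedAddCommGroup E]
    [NormedSpace ℝ E] {ψ : ι → E → ℝ} {q : ι → E} (hψ : ∀ i, DifferentiableAt ℝ (ψ i) (q i))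
    (c : ι → ℝ) (v : E) (lam : ℝ)
    (h : IsLocalMin (fun t : ℝ => ∑ i, ψ i (q i + (t * c i) • v) + lam * t ^ 2) 0) :
    ∑ i, fderiv ℝ (ψ i) (q i) v * c i = 0 := by
  have hterm (i : ι) :
      HasDerivAt (fun t : ℝ => ψ i (q i + (t * c i) • v)) (fderiv ℝ (ψ i) (q i) v * c i) 0 := by
    have hline : HasDerivAt (fun t : ℝ => q i + (t * c i) • v) (c i • v) 0 := by
      simpa using (((hasDerivAt_id (0 : ℝ)).mul_const (c i)).smul_const v).const_add (q i)
    exact ((hψ i).hasFDerivAt.comp_hasDerivAt_of_eq 0 hline (by simp)).congr_deriv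
      (by simp [mul_comm])
  have hderiv := (HasDerivAt.fun_sum (u := univ) fun i _ => hterm i).add
    ((hasDerivAt_pow 2 (0 : ℝ)).const_mul lam)
  simpa using h.hasDerivAt_eq_zero hderiv

section addedNeuron

variable {dx dy : ℕ}

@[simp]
theorem addedNeuron_zero_left (b : EuclideanSpace ℝ (Fin dy))
    (W : Fin dy → EuclideanSpace ℝ (Fin dx)) : addedNeuron dx dy 0 b W = 0 := by
  ext z k
  simp [addedNeuron]

theorem addedNeuron_exp_smul_sub (t : ℝ) (a b : EuclideanSpace ℝ (Fin dy))
    (W : Fin dy → EuclideanSpace ℝ (Fin dx)) :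
    addedNeuron dx dy (Real.exp t • a) (b - WithLp.toLp 2 fun _ => t) W =
      addedNeuron dx dy a b W := by
  ext z k
  simp only [addedNeuron, PiLp.smul_apply, PiLp.sub_apply, smul_eq_mul, add_sub,
    Real.exp_sub]
  field_simp

theorem addedNeuron_smul_single (t : ℝ) (k : Fin dy) (b : EuclideanSpace ℝ (Fin dy))
    (W : Fin dy → EuclideanSpace ℝ (Fin dx)) (z : EuclideanSpace ℝ (Fin dx)) :
    addedNeuron dx dy (t • EuclideanSpace.single k 1) b W z =
      (t * Real.exp (⟪W k, z⟫ + b k)) • EuclideanSpace.single k 1 := by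
  ext k'
  by_cases hk : k' = k
  · subst hk; simp [addedNeuron]
  · simp [addedNeuron, hk]

theorem eq_zero_of_isLocalMin_comp_addedNeuron_add {Φ : (EuclideanSpace ℝ (Fin dx) →
    EuclideanSpace ℝ (Fin dy)) → ℝ} {lam : ℝ} (hlam : 0 < lam) {a b : EuclideanSpace ℝ (Fin dy)}
    {W : Fin dy → EuclideanSpace ℝ (Fin dx)}
    (h : IsLocalMin (fun p : EuclideanSpace ℝ (Fin dy) × EuclideanSpace ℝ (Fin dy) ×
      (Fin dy → EuclideanSpace ℝ (Fin dx)) =>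
        Φ (addedNeuron dx dy p.1 p.2.1 p.2.2) + lam * ‖p.1‖ ^ 2) (a, b, W)) :
    a = 0 := by
  let γ : ℝ → EuclideanSpace ℝ (Fin dy) × EuclideanSpace ℝ (Fin dy) ×
      (Fin dy → EuclideanSpace ℝ (Fin dx)) :=
    fun t => (Real.exp t • a, b - WithLp.toLp 2 fun _ => t, W)
  have hγ0 : γ 0 = (a, b, W) := by ext <;> simp [γ]
  have hγ : Continuous γ := by fun_prop
  have hmin := (hγ0 ▸ h).comp_continuous hγ.continuousAt
  have hval : (fun p : EuclideanSpace ℝ (Fin dy) × EuclideanSpace ℝ (Fin dy) ×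
      (Fin dy → EuclideanSpace ℝ (Fin dx)) =>
        Φ (addedNeuron dx dy p.1 p.2.1 p.2.2) + lam * ‖p.1‖ ^ 2) ∘ γ =
      fun t => Φ (addedNeuron dx dy a b W) + lam * ‖a‖ ^ 2 * Real.exp t ^ 2 := by
    funext t
    simp only [γ, Function.comp_apply, addedNeuron_exp_smul_sub, norm_smul, Real.norm_eq_abs,
      Real.abs_exp]
    ring
  have hderiv : HasDerivAt (fun t => Φ (addedNeuron dx dy a b W) + lam * ‖a‖ ^ 2 * Real.exp t ^ 2)
      (lam * ‖a‖ ^ 2 * 2) 0 := by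
    simpa using (((Real.hasDerivAt_exp 0).pow 2).const_mul (lam * ‖a‖ ^ 2)).const_add
      (Φ (addedNeuron dx dy a b W))
  rw [hval] at hmin
  simpa [hlam.ne'] using hmin.hasDerivAt_eq_zero hderiv

theorem sum_fderiv_single_mul_exp_eq_zero_of_isLocalMin {ι : Type*} [Fintype ι]
    {ψ : ι → EuclideanSpace ℝ (Fin dy) → ℝ} {q : ι → EuclideanSpace ℝ (Fin dy)}
    (hψ : ∀ i, DifferentiableAt ℝ (ψ i) (q i)) {x : ι → EuclideanSpace ℝ (Fin dx)} {lam : ℝ}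
    {b : EuclideanSpace ℝ (Fin dy)} {W : Fin dy → EuclideanSpace ℝ (Fin dx)}
    (h : IsLocalMin (fun a => ∑ i, ψ i (q i + addedNeuron dx dy a b W (x i)) + lam * ‖a‖ ^ 2) 0)
    (k : Fin dy) :
    ∑ i, fderiv ℝ (ψ i) (q i) (EuclideanSpace.single k 1) * Real.exp (⟪W k, x i⟫ + b k) = 0 := by
  refine sum_fderiv_mul_eq_zero_of_isLocalMin hψ _ _ lam ?_
  have hline : ContinuousAt (fun t : ℝ => t • EuclideanSpace.single k (1 : ℝ)) 0 := by fun_prop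
  have hmin := IsLocalMin.comp_continuous (by simpa using h) hline
  simp only [Function.comp_def, addedNeuron_smul_single] at hmin
  simpa [norm_smul] using hmin

open Classical in
theorem sum_filter_fderiv_eq_zero_of_isLocalMin {ι : Type*} [Fintype ι]
    {ψ : ι → EuclideanSpace ℝ (Fin dy) → ℝ} {q : ι → EuclideanSpace ℝ (Fin dy)}
    (hψ : ∀ i, DifferentiableAt ℝ (ψ i) (q i)) {x : ι → EuclideanSpace ℝ (Fin dx)} {lam : ℝ}
    {b : EuclideanSpace ℝ (Fin dy)} {W : Fin dy → EuclideanSpace ℝ (Fin dx)}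
    (h : IsLocalMin (fun p : EuclideanSpace ℝ (Fin dy) × EuclideanSpace ℝ (Fin dy) ×
      (Fin dy → EuclideanSpace ℝ (Fin dx)) =>
        ∑ i, ψ i (q i + addedNeuron dx dy p.1 p.2.1 p.2.2 (x i)) + lam * ‖p.1‖ ^ 2) (0, b, W))
    (i : ι) : ∑ j with x j = x i, fderiv ℝ (ψ j) (q j) = 0 := by
  have hslice := h.eventually_isLocalMin_left_of_forall_eq fun bW => by simp
  have hcoord (k : Fin dy) :
      ∑ j with x j = x i, fderiv ℝ (ψ j) (q j) (EuclideanSpace.single k 1) = 0 := by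
    have hW : Tendsto (fun w => (b, Function.update W k w)) (𝓝 (W k)) (𝓝 (b, W)) := by
      have hcont : Continuous fun w => (b, Function.update W k w) := by fun_prop
      simpa using hcont.tendsto (W k)
    have hexp : ∀ᶠ w in 𝓝 (W k), ∑ j,
        fderiv ℝ (ψ j) (q j) (EuclideanSpace.single k 1) * Real.exp (b k) * Real.exp ⟪w, x j⟫
          = 0 := by
      filter_upwards [hW.eventually hslice] with w hw
      rw [← sum_fderiv_single_mul_exp_eq_zero_of_isLocalMin hψ hw k]
      refine sum_congr rfl fun j _ => ?_
      rw [Function.update_self, Real.exp_add]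
      ring
    have hgroup := sum_filter_eq_zero_of_sum_mul_exp_inner_eventually_eq_zero _ x hexp i
    rw [← sum_mul] at hgroup
    exact (mul_eq_zero.1 hgroup).resolve_right (Real.exp_pos _).ne'
  exact ContinuousLinearMap.coe_injective <|
    (EuclideanSpace.basisFun (Fin dy) ℝ).toBasis.ext fun k => by simpa using hcoord k

end addedNeuron

theorem failure_mode_no_restricted_local_min_general
    (m dx dy dθ : ℕ)
    (x : Fin m → EuclideanSpace ℝ (Fin dx))
    (y : Fin m → EuclideanSpace ℝ (Fin dy))
    (f : EuclideanSpace ℝ (Fin dx) → EuclideanSpace ℝ (Fin dθ) → EuclideanSpace ℝ (Fin dy))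
    (ℓ : EuclideanSpace ℝ (Fin dy) → EuclideanSpace ℝ (Fin dy) → ℝ)
    -- Assumption 1: each ℓ_{y_i} is differentiable, convex and nonnegative
    (hdiff : ∀ i : Fin m, Differentiable ℝ (fun q => ℓ q (y i)))
    (hconv : ∀ i : Fin m, ConvexOn ℝ Set.univ (fun q => ℓ q (y i)))
    (lam : ℝ) (hlam : 0 < lam)
    -- the original objective L
    (L : EuclideanSpace ℝ (Fin dθ) → ℝ)
    (hL : ∀ θ, L θ = (1 / (m : ℝ)) * ∑ i, ℓ (f (x i) θ) (y i))
    -- the modified objective L̃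
    (Lt : EuclideanSpace ℝ (Fin dθ) → EuclideanSpace ℝ (Fin dy) → EuclideanSpace ℝ (Fin dy) →
      (Fin dy → EuclideanSpace ℝ (Fin dx)) → ℝ)
    (hLt : ∀ θ a b W, Lt θ a b W =
      (1 / (m : ℝ)) * ∑ i, ℓ (f (x i) θ + addedNeuron dx dy a b W (x i)) (y i)
        + lam * ‖a‖ ^ 2)
    (θ : EuclideanSpace ℝ (Fin dθ))
    (hθ : ¬ ∀ θ' : EuclideanSpace ℝ (Fin dθ), L θ ≤ L θ') :
    ∀ (a b : EuclideanSpace ℝ (Fin dy)) (W : Fin dy → EuclideanSpace ℝ (Fin dx)),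
      ¬ IsLocalMin (fun p : EuclideanSpace ℝ (Fin dy) × EuclideanSpace ℝ (Fin dy) ×
          (Fin dy → EuclideanSpace ℝ (Fin dx)) =>
          Lt θ p.1 p.2.1 p.2.2) (a, b, W) := by
  classical
  intro a b W hmin
  let ψ (i : Fin m) (q : EuclideanSpace ℝ (Fin dy)) : ℝ := 1 / (m : ℝ) * ℓ q (y i)
  have hψ (i : Fin m) (q : EuclideanSpace ℝ (Fin dy)) : DifferentiableAt ℝ (ψ i) q :=
    (hdiff i q).const_mul _
  have hLt_eq : (fun p : EuclideanSpace ℝ (Fin dy) × EuclideanSpace ℝ (Fin dy) ×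
      (Fin dy → EuclideanSpace ℝ (Fin dx)) => Lt θ p.1 p.2.1 p.2.2) =
      fun p =>
        ∑ i, ψ i (f (x i) θ + addedNeuron dx dy p.1 p.2.1 p.2.2 (x i)) + lam * ‖p.1‖ ^ 2 := by
    funext p
    rw [hLt, mul_sum]
  rw [hLt_eq] at hmin
  obtain rfl := eq_zero_of_isLocalMin_comp_addedNeuron_add
    (Φ := fun g => ∑ i, ψ i (f (x i) θ + g (x i))) hlam hmin
  have hgrad := sum_filter_fderiv_eq_zero_of_isLocalMin (fun i => hψ i _) hmin
  refine hθ fun θ' => ?_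
  rw [hL, hL, mul_sum, mul_sum]
  exact sum_le_sum_of_sum_filter_fderiv_eq_zero (F := fun z => f z θ)
    (fun i => (hconv i).smul (by positivity)) (fun i => hψ i _) hgrad fun z => f z θ'

/-- Under Assumption 1 and `λ > 0`, for any `θ` that is not a global
minimum of `L`, the restricted map `(a,b,W) ↦ L̃(θ,a,b,W)` has no local minimum. -/
theorem failure_mode_no_restricted_local_min
    (m dx dy dθ : ℕ) (hm : 0 < m) (hdx : 0 < dx) (hdy : 0 < dy) (hdθ : 0 < dθ)
    (x : Fin m → EuclideanSpace ℝ (Fin dx))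
    (y : Fin m → EuclideanSpace ℝ (Fin dy))
    (f : EuclideanSpace ℝ (Fin dx) → EuclideanSpace ℝ (Fin dθ) → EuclideanSpace ℝ (Fin dy))
    (ℓ : EuclideanSpace ℝ (Fin dy) → EuclideanSpace ℝ (Fin dy) → ℝ)
    -- Assumption 1: each ℓ_{y_i} is differentiable, convex and nonnegative
    (hdiff : ∀ i : Fin m, Differentiable ℝ (fun q => ℓ q (y i)))
    (hconv : ∀ i : Fin m, ConvexOn ℝ Set.univ (fun q => ℓ q (y i)))
    (hnonneg : ∀ (i : Fin m) (q : EuclideanSpace ℝ (Fin dy)), 0 ≤ ℓ q (y i))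
    (lam : ℝ) (hlam : 0 < lam)
    -- the original objective L
    (L : EuclideanSpace ℝ (Fin dθ) → ℝ)
    (hL : ∀ θ, L θ = (1 / (m : ℝ)) * ∑ i, ℓ (f (x i) θ) (y i))
    -- the modified objective L̃
    (Lt : EuclideanSpace ℝ (Fin dθ) → EuclideanSpace ℝ (Fin dy) → EuclideanSpace ℝ (Fin dy) →
      (Fin dy → EuclideanSpace ℝ (Fin dx)) → ℝ)
    (hLt : ∀ θ a b W, Lt θ a b W =
      (1 / (m : ℝ)) * ∑ i, ℓ (f (x i) θ + addedNeuron dx dy a b W (x i)) (y i)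
        + lam * ‖a‖ ^ 2)
    (θ : EuclideanSpace ℝ (Fin dθ))
    (hθ : ¬ ∀ θ' : EuclideanSpace ℝ (Fin dθ), L θ ≤ L θ') :
    ∀ (a b : EuclideanSpace ℝ (Fin dy)) (W : Fin dy → EuclideanSpace ℝ (Fin dx)),
      ¬ IsLocalMin (fun p : EuclideanSpace ℝ (Fin dy) × EuclideanSpace ℝ (Fin dy) ×
          (Fin dy → EuclideanSpace ℝ (Fin dx)) =>
          Lt θ p.1 p.2.1 p.2.2) (a, b, W) :=
  failure_mode_no_restricted_local_min_general m dx dy dθ x y f ℓ hdiff hconv lam hlam L hL Lt hLt θ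
    hθ
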